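/- arXiv:2203.11869 — 3 statements merged into one kernel-verified Lean document; each statement's English description precedes it below -/
import Mathlib

section
/- Let (X,Y) be jointly Gaussian as above, A, K as in the optimal transport EnKF, and define the OT-EnKF update X₁ = m_x + A(X₀ − m_x) + K(y − m_y) for X₀ ∼ N(m_x, Σ_x), and the perturbed-observation EnKF update X₁' = X₀ + K(y − Y₀) where (X₀, Y₀) ∼ N((m_x,m_y), Σ) jointly Gaussian with covariance Σ. Then X₁ and X₁' have the same mean m_x + K(y − m_y) and the same covariance Σ_x − Σ_xy Σ_y^{-1} Σ_xyᵀ. -/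
/-!
Both updates are affine images `c + M *ᵥ Z` of a centred vector `Z` with known second moments
`S`, hence have mean `c = m_x + K (y - m_y)` and covariance `M * S * Mᵀ`. For the transport
update `M = A` and `Z = X₀ - m_x`, so the covariance is `A Σ_x A = Σ_x - K Σ_y Kᵀ`. For the
perturbed-observation update `Z` stacks `X₀ - m_x` and `Y₀ - m_y` and `M = [I, -K]`, so the
covariance is `[I, -K] Σ [I, -K]ᵀ = Σ_x - K Σ_xyᵀ - Σ_xy Kᵀ + K Σ_y Kᵀ`. Since `K Σ_y = Σ_xy`,
both equal the Schur complement `Σ_x - Σ_xy Σ_y⁻¹ Σ_xyᵀ`.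
-/

open Matrix MeasureTheory

section SchurComplement

variable {n m R : Type*} [Fintype m] [DecidableEq m] [CommRing R]

lemma mul_inv_mul_mul_transpose_mul_inv (B : Matrix n m R) {S : Matrix m m R}
    (hS : Sᵀ = S) (hdet : IsUnit S.det) :
    B * S⁻¹ * S * (B * S⁻¹)ᵀ = B * S⁻¹ * Bᵀ := by
  rw [Matrix.mul_assoc B, nonsing_inv_mul S hdet, Matrix.mul_one, transpose_mul,
    transpose_nonsing_inv, hS, Matrix.mul_assoc]

lemma fromCols_one_neg_mul_fromBlocks_mul_transpose [Fintype n] [DecidableEq n]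
    (T : Matrix n n R) (B : Matrix n m R) {S : Matrix m m R}
    (hS : Sᵀ = S) (hdet : IsUnit S.det) :
    fromCols (1 : Matrix n n R) (-(B * S⁻¹)) * fromBlocks T B Bᵀ S *
        (fromCols (1 : Matrix n n R) (-(B * S⁻¹)))ᵀ = T - B * S⁻¹ * Bᵀ := by
  have hBS : B * S⁻¹ * S = B := by
    rw [Matrix.mul_assoc, nonsing_inv_mul S hdet, Matrix.mul_one]
  have hBt : (B * S⁻¹)ᵀ = S⁻¹ * Bᵀ := by
    rw [transpose_mul, transpose_nonsing_inv, hS]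
  rw [fromCols_mul_fromBlocks, transpose_fromCols, fromCols_mul_fromRows, transpose_neg, hBt,
    transpose_one]
  simp only [Matrix.one_mul, Matrix.mul_one, Matrix.neg_mul, hBS, add_neg_cancel,
    Matrix.zero_mul, add_zero, sub_eq_add_neg]

end SchurComplement

section SecondMoments

variable {Ω ι κ : Type*} [Fintype ι] [MeasurableSpace Ω] {P : Measure Ω} {Z : Ω → ι → ℝ}

lemma integral_mulVec_apply (M : Matrix κ ι ℝ) (hZ : ∀ k, Integrable (fun ω => Z ω k) P)
    (i : κ) : ∫ ω, (M *ᵥ Z ω) i ∂P = (M *ᵥ fun k => ∫ ω, Z ω k ∂P) i := by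
  simp only [mulVec, dotProduct]
  rw [integral_finsetSum _ fun k _ => (hZ k).const_mul _]
  simp only [integral_const_mul]

lemma integral_mulVec_mul_mulVec {ν : Type*} (M : Matrix κ ι ℝ) (N : Matrix ν ι ℝ)
    (hZ : ∀ k, MemLp (fun ω => Z ω k) 2 P) {S : Matrix ι ι ℝ}
    (hS : ∀ k l, ∫ ω, Z ω k * Z ω l ∂P = S k l) (i : κ) (j : ν) :
    ∫ ω, (M *ᵥ Z ω) i * (N *ᵥ Z ω) j ∂P = (M * S * Nᵀ) i j := by
  have hprod : ∀ k l, Integrable (fun ω => Z ω k * Z ω l) P :=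
    fun k l => (hZ k).integrable_mul (hZ l)
  have hexpand : ∀ ω, (M *ᵥ Z ω) i * (N *ᵥ Z ω) j
      = ∑ k, ∑ l, M i k * N j l * (Z ω k * Z ω l) := by
    intro ω
    simp only [mulVec, dotProduct, Finset.sum_mul, Finset.mul_sum]
    rw [Finset.sum_comm]
    exact Finset.sum_congr rfl fun k _ => Finset.sum_congr rfl fun l _ => by ring
  simp_rw [hexpand]
  rw [integral_finsetSum _ fun k _ => integrable_finsetSum _ fun l _ => (hprod k l).const_mul _]
  simp_rw [integral_finsetSum _ fun l _ => (hprod _ l).const_mul _, integral_const_mul, hS]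
  simp only [mul_apply, transpose_apply, Finset.sum_mul]
  rw [Finset.sum_comm]
  exact Finset.sum_congr rfl fun k _ => Finset.sum_congr rfl fun l _ => by ring

omit [Fintype ι] in
lemma integral_sumElim_mul_sumElim {α β : Type*} {U : Ω → α → ℝ} {V : Ω → β → ℝ}
    {SU : Matrix α α ℝ} {SV : Matrix β β ℝ} {SUV : Matrix α β ℝ}
    (hU : ∀ i j, ∫ ω, U ω i * U ω j ∂P = SU i j) (hV : ∀ i j, ∫ ω, V ω i * V ω j ∂P = SV i j)
    (hUV : ∀ i j, ∫ ω, U ω i * V ω j ∂P = SUV i j) (k l : α ⊕ β) :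
    ∫ ω, Sum.elim (U ω) (V ω) k * Sum.elim (U ω) (V ω) l ∂P = fromBlocks SU SUV SUVᵀ SV k l := by
  rcases k with i | i <;> rcases l with j | j
  · exact hU i j
  · exact hUV i j
  · simp only [Sum.elim_inr, Sum.elim_inl, fromBlocks_apply₂₁, transpose_apply, ← hUV j i]
    simp_rw [mul_comm (V _ i)]
  · exact hV i j

end SecondMoments

section AffineMoments

variable {Ω ι κ : Type*} [Fintype ι] [MeasurableSpace Ω] {P : Measure Ω}
  [IsProbabilityMeasure P] {Z : Ω → ι → ℝ}

lemma integral_sub_eq_zero_of_integral_eq {f : Ω → ℝ} {a : ℝ} (hf : Integrable f P)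
    (ha : ∫ ω, f ω ∂P = a) : ∫ ω, (f ω - a) ∂P = 0 := by
  rw [integral_sub hf (integrable_const a), ha, integral_const, probReal_univ, one_smul, sub_self]

lemma integral_add_mulVec_apply (c : κ → ℝ) (M : Matrix κ ι ℝ)
    (hZ : ∀ k, Integrable (fun ω => Z ω k) P) (hZ0 : ∀ k, ∫ ω, Z ω k ∂P = 0) (i : κ) :
    ∫ ω, (c + M *ᵥ Z ω) i ∂P = c i := by
  have hMZ : Integrable (fun ω => (M *ᵥ Z ω) i) P :=
    integrable_finsetSum _ fun k _ => (hZ k).const_mul _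
  simp only [Pi.add_apply]
  rw [integral_add (integrable_const _) hMZ, integral_const, integral_mulVec_apply M hZ]
  simp [hZ0, mulVec, dotProduct]

omit [IsProbabilityMeasure P] in
lemma integral_add_mulVec_sub_mul_add_mulVec_sub (c : κ → ℝ) (M : Matrix κ ι ℝ)
    (hZ : ∀ k, MemLp (fun ω => Z ω k) 2 P) {S : Matrix ι ι ℝ}
    (hS : ∀ k l, ∫ ω, Z ω k * Z ω l ∂P = S k l) (i j : κ) :
    ∫ ω, ((c + M *ᵥ Z ω) i - c i) * ((c + M *ᵥ Z ω) j - c j) ∂P = (M * S * Mᵀ) i j := by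
  simp only [Pi.add_apply, add_sub_cancel_left]
  exact integral_mulVec_mul_mulVec M M hZ hS i j

end AffineMoments

theorem stmt8_general {n m : ℕ} {Ω : Type*} [MeasurableSpace Ω]
    (P : Measure Ω) [IsProbabilityMeasure P]
    (X0 : Ω → Fin n → ℝ) (Y0 : Ω → Fin m → ℝ)
    (mx : Fin n → ℝ) (my : Fin m → ℝ)
    (Sx : Matrix (Fin n) (Fin n) ℝ) (Sy : Matrix (Fin m) (Fin m) ℝ)
    (Sxy : Matrix (Fin n) (Fin m) ℝ)
    (hSy : Sy.PosDef)
    (hX0L2 : ∀ i, MemLp (fun ω => X0 ω i) 2 P)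
    (hY0L2 : ∀ j, MemLp (fun ω => Y0 ω j) 2 P)
    (hmx : ∀ i, ∫ ω, X0 ω i ∂P = mx i)
    (hmy : ∀ j, ∫ ω, Y0 ω j ∂P = my j)
    (hcovx : ∀ i j, ∫ ω, (X0 ω i - mx i) * (X0 ω j - mx j) ∂P = Sx i j)
    (hcovy : ∀ i j, ∫ ω, (Y0 ω i - my i) * (Y0 ω j - my j) ∂P = Sy i j)
    (hcovxy : ∀ i j, ∫ ω, (X0 ω i - mx i) * (Y0 ω j - my j) ∂P = Sxy i j)
    (K : Matrix (Fin n) (Fin m) ℝ) (hK : K = Sxy * Sy⁻¹)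
    (A : Matrix (Fin n) (Fin n) ℝ) (hA : A.PosDef)
    (hAS : A * Sx * A = Sx - K * Sy * Kᵀ)
    (y : Fin m → ℝ)
    (X1 X1' : Ω → Fin n → ℝ)
    (hX1 : ∀ ω, X1 ω = mx + A.mulVec (X0 ω - mx) + K.mulVec (y - my))
    (hX1' : ∀ ω, X1' ω = X0 ω + K.mulVec (y - Y0 ω)) :
    (∀ i, ∫ ω, X1 ω i ∂P = (mx + K.mulVec (y - my)) i) ∧
    (∀ i, ∫ ω, X1' ω i ∂P = (mx + K.mulVec (y - my)) i) ∧
    (∀ i j, ∫ ω, (X1 ω i - (mx + K.mulVec (y - my)) i) *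
        (X1 ω j - (mx + K.mulVec (y - my)) j) ∂P = (Sx - Sxy * Sy⁻¹ * Sxyᵀ) i j) ∧
    (∀ i j, ∫ ω, (X1' ω i - (mx + K.mulVec (y - my)) i) *
        (X1' ω j - (mx + K.mulVec (y - my)) j) ∂P = (Sx - Sxy * Sy⁻¹ * Sxyᵀ) i j) := by
  have hSyT : Syᵀ = Sy := hSy.isHermitian.eq
  have hAT : Aᵀ = A := hA.isHermitian.eq
  have hSydet : IsUnit Sy.det := isUnit_iff_ne_zero.mpr hSy.det_pos.ne'
  set c := mx + K *ᵥ (y - my) with hc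
  have hXL2 : ∀ i, MemLp (fun ω => (X0 ω - mx) i) 2 P := fun i => (hX0L2 i).sub (memLp_const _)
  have hYL2 : ∀ j, MemLp (fun ω => (Y0 ω - my) j) 2 P := fun j => (hY0L2 j).sub (memLp_const _)
  have hX0 : ∀ i, ∫ ω, (X0 ω - mx) i ∂P = 0 := fun i =>
    integral_sub_eq_zero_of_integral_eq ((hX0L2 i).integrable one_le_two) (hmx i)
  have hY0 : ∀ j, ∫ ω, (Y0 ω - my) j ∂P = 0 := fun j =>
    integral_sub_eq_zero_of_integral_eq ((hY0L2 j).integrable one_le_two) (hmy j)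
  set Z : Ω → Fin n ⊕ Fin m → ℝ := fun ω => Sum.elim (X0 ω - mx) (Y0 ω - my)
  have hZL2 : ∀ k, MemLp (fun ω => Z ω k) 2 P := Sum.forall.2 ⟨hXL2, hYL2⟩
  have hZ0 : ∀ k, ∫ ω, Z ω k ∂P = 0 := Sum.forall.2 ⟨hX0, hY0⟩
  have hZcov := integral_sumElim_mul_sumElim hcovx hcovy hcovxy
  have hX1c : ∀ ω, X1 ω = c + A *ᵥ (X0 ω - mx) := fun ω => by
    rw [hX1 ω, hc, add_right_comm]
  have hX1'c : ∀ ω, X1' ω = c + fromCols 1 (-K) *ᵥ Z ω := fun ω => by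
    simp only [hX1' ω, hc, Z, fromCols_mulVec_sumElim, one_mulVec, neg_mulVec, mulVec_sub]
    abel
  simp only [hX1c, hX1'c]
  refine ⟨integral_add_mulVec_apply c A (fun i => (hXL2 i).integrable one_le_two) hX0,
    integral_add_mulVec_apply c _ (fun k => (hZL2 k).integrable one_le_two) hZ0,
    fun i j => ?_, fun i j => ?_⟩
  · rw [integral_add_mulVec_sub_mul_add_mulVec_sub c A hXL2 hcovx, hAT, hAS, hK,
      mul_inv_mul_mul_transpose_mul_inv Sxy hSyT hSydet]
  · rw [integral_add_mulVec_sub_mul_add_mulVec_sub c _ hZL2 hZcov, hK,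
      fromCols_one_neg_mul_fromBlocks_mul_transpose Sx Sxy hSyT hSydet]

theorem stmt8 {n m : ℕ} {Ω : Type*} [MeasurableSpace Ω]
    (P : Measure Ω) [IsProbabilityMeasure P]
    (X0 : Ω → Fin n → ℝ) (Y0 : Ω → Fin m → ℝ)
    (mx : Fin n → ℝ) (my : Fin m → ℝ)
    (Sx : Matrix (Fin n) (Fin n) ℝ) (Sy : Matrix (Fin m) (Fin m) ℝ)
    (Sxy : Matrix (Fin n) (Fin m) ℝ)
    (hSx : Sx.PosDef) (hSy : Sy.PosDef)
    (hblock : (Matrix.fromBlocks Sx Sxy Sxyᵀ Sy).PosDef)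
    (hX0L2 : ∀ i, MemLp (fun ω => X0 ω i) 2 P)
    (hY0L2 : ∀ j, MemLp (fun ω => Y0 ω j) 2 P)
    (hmx : ∀ i, ∫ ω, X0 ω i ∂P = mx i)
    (hmy : ∀ j, ∫ ω, Y0 ω j ∂P = my j)
    (hcovx : ∀ i j, ∫ ω, (X0 ω i - mx i) * (X0 ω j - mx j) ∂P = Sx i j)
    (hcovy : ∀ i j, ∫ ω, (Y0 ω i - my i) * (Y0 ω j - my j) ∂P = Sy i j)
    (hcovxy : ∀ i j, ∫ ω, (X0 ω i - mx i) * (Y0 ω j - my j) ∂P = Sxy i j)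
    (K : Matrix (Fin n) (Fin m) ℝ) (hK : K = Sxy * Sy⁻¹)
    (A : Matrix (Fin n) (Fin n) ℝ) (hA : A.PosDef)
    (hAS : A * Sx * A = Sx - K * Sy * Kᵀ)
    (y : Fin m → ℝ)
    (X1 X1' : Ω → Fin n → ℝ)
    (hX1 : ∀ ω, X1 ω = mx + A.mulVec (X0 ω - mx) + K.mulVec (y - my))
    (hX1' : ∀ ω, X1' ω = X0 ω + K.mulVec (y - Y0 ω)) :
    (∀ i, ∫ ω, X1 ω i ∂P = (mx + K.mulVec (y - my)) i) ∧
    (∀ i, ∫ ω, X1' ω i ∂P = (mx + K.mulVec (y - my)) i) ∧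
    (∀ i j, ∫ ω, (X1 ω i - (mx + K.mulVec (y - my)) i) *
        (X1 ω j - (mx + K.mulVec (y - my)) j) ∂P = (Sx - Sxy * Sy⁻¹ * Sxyᵀ) i j) ∧
    (∀ i j, ∫ ω, (X1' ω i - (mx + K.mulVec (y - my)) i) *
        (X1' ω j - (mx + K.mulVec (y - my)) j) ∂P = (Sx - Sxy * Sy⁻¹ * Sxyᵀ) i j) :=
  stmt8_general P X0 Y0 mx my Sx Sy Sxy hSy hX0L2 hY0L2 hmx hmy hcovx hcovy hcovxy K hK A hA hAS y
    X1 X1' hX1 hX1'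
end

section
/- Let θ = (A, K, b̃) with A ∈ S⁺ⁿ, and define G(θ) = ½Tr(AΣ_x) + ½Tr(A^{-1}Σ_x) + ½Tr(A^{-1}KΣ_yKᵀ) − Tr(A^{-1}Σ_xyKᵀ) + ½(b̃ − m_x)ᵀA^{-1}(b̃ − m_x), where Σ_x ≻ 0, Σ_y ≻ 0 and the joint covariance matrix is positive definite. Then the unique minimizer of G satisfies b̃ = m_x, K = Σ_xy Σ_y^{-1}, and A Σ_x A = Σ_x − Σ_xy Σ_y^{-1} Σ_xyᵀ. -/
open Matrix
open scoped MatrixOrder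

set_option linter.unusedSectionVars false

section helpers

variable {n p : Type*} [Fintype n] [Fintype p] [DecidableEq n]

lemma aux_diag_quad (P : Matrix n n ℝ) (D : Matrix n p ℝ) (j : p) :
    (Dᵀ * P * D) j j = (fun i => D i j) ⬝ᵥ P *ᵥ (fun i => D i j) := by
  simp only [Matrix.mul_apply, Matrix.mulVec, dotProduct, Matrix.transpose_apply,
    Finset.sum_mul, Finset.mul_sum]
  rw [Finset.sum_comm]
  apply Finset.sum_congr rfl
  intro i _
  apply Finset.sum_congr rfl
  intro k _
  ring

lemma aux_trace_quad_nonneg {P : Matrix n n ℝ} (hP : P.PosSemidef) (D : Matrix n p ℝ) :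
    0 ≤ (Dᵀ * P * D).trace := by
  rw [Matrix.trace]
  apply Finset.sum_nonneg
  intro j _
  rw [Matrix.diag_apply, aux_diag_quad]
  simpa using hP.dotProduct_mulVec_nonneg (fun i => D i j)

lemma aux_trace_quad_zero {P : Matrix n n ℝ} (hP : P.PosDef) {D : Matrix n p ℝ}
    (h : (Dᵀ * P * D).trace = 0) : D = 0 := by
  have hnn : ∀ j ∈ Finset.univ, (0:ℝ) ≤ (Dᵀ * P * D).diag j := by
    intro j _
    rw [Matrix.diag_apply, aux_diag_quad]
    simpa using hP.posSemidef.dotProduct_mulVec_nonneg (fun i => D i j)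
  have hz : ∀ j ∈ Finset.univ, (Dᵀ * P * D).diag j = 0 :=
    (Finset.sum_eq_zero_iff_of_nonneg hnn).mp h
  ext i j
  by_contra hij
  have hcol : (fun i => D i j) ≠ 0 := by
    intro hc
    exact hij (by simpa using congrFun hc i)
  have := hP.dotProduct_mulVec_pos hcol
  have h0 := hz j (Finset.mem_univ j)
  rw [Matrix.diag_apply, aux_diag_quad] at h0
  simp only [star_trivial] at this
  exact absurd h0 (ne_of_gt this)

lemma aux_posDef_of_posSemidef {M : Matrix n n ℝ} (hM : M.PosSemidef)
    (hd : IsUnit M.det) : M.PosDef := by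
  refine Matrix.PosDef.of_dotProduct_mulVec_pos hM.1 (fun x hx => lt_of_le_of_ne (by simpa using hM.dotProduct_mulVec_nonneg x) ?_)
  intro h
  apply hx
  have h0 : M *ᵥ x = 0 := (hM.dotProduct_mulVec_zero_iff x).mp (by simpa using h.symm)
  have := congrArg (fun v => M⁻¹ *ᵥ v) h0
  simpa [Matrix.mulVec_mulVec, Matrix.nonsing_inv_mul M hd] using this

lemma aux_sqrt_posDef {M : Matrix n n ℝ} (hM : M.PosDef) : (CFC.sqrt M).PosDef := by
  apply aux_posDef_of_posSemidef (CFC.sqrt_nonneg M).posSemidef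
  have h : (CFC.sqrt M).det ^ 2 = M.det := by
    rw [← Matrix.det_pow, CFC.sq_sqrt M hM.posSemidef.nonneg]
  have : (CFC.sqrt M).det ≠ 0 := by
    intro h0
    rw [h0] at h
    simp at h
    exact hM.det_pos.ne' h.symm
  exact this.isUnit

lemma aux_conj_posDef {P R : Matrix n n ℝ} (hP : P.PosDef) (hR : IsUnit R.det) :
    (Rᵀ * P * R).PosDef := by
  refine Matrix.PosDef.of_dotProduct_mulVec_pos ?_ (fun x hx => ?_)
  · have : (Rᵀ * P * R)ᴴ = Rᵀ * P * R := by
      simp only [Matrix.conjTranspose_mul, ← Matrix.conjTranspose_eq_transpose_of_trivial]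
      rw [Matrix.conjTranspose_conjTranspose, hP.1.eq, Matrix.mul_assoc]
    exact this
  · have hRx : R *ᵥ x ≠ 0 := (Matrix.mulVec_injective_iff_isUnit.mpr ((Matrix.isUnit_iff_isUnit_det R).mpr hR)).ne_iff' (by simp) |>.mpr hx
    have hpos := hP.dotProduct_mulVec_pos hRx
    have e : star x ⬝ᵥ (Rᵀ * P * R) *ᵥ x = star (R *ᵥ x) ⬝ᵥ P *ᵥ (R *ᵥ x) := by
      rw [star_trivial, star_trivial, ← Matrix.mulVec_mulVec, ← Matrix.mulVec_mulVec,
        Matrix.dotProduct_mulVec x Rᵀ, Matrix.vecMul_transpose]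
    rw [e]
    exact hpos


section part2
set_option linter.unusedSectionVars false

variable {n p : Type*} [Fintype n] [Fintype p] [DecidableEq n] [DecidableEq p]

lemma aux_expand (B : Matrix n n ℝ) (hB : Bᵀ = B) (K' K₀ : Matrix n p ℝ)
    (Ty : Matrix p p ℝ) (hTy : Tyᵀ = Ty) :
    (((K' - K₀) * Ty)ᵀ * B * ((K' - K₀) * Ty)).trace
      = (B * K' * (Ty * Ty) * K'ᵀ).trace - 2 * (B * K₀ * (Ty * Ty) * K'ᵀ).trace
        + (B * K₀ * (Ty * Ty) * K₀ᵀ).trace := by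
  have cyc : ∀ (X : Matrix n p ℝ) (Y : Matrix p n ℝ), (X * Y).trace = (Y * X).trace :=
    fun X Y => Matrix.trace_mul_comm X Y
  have key : ∀ (U V : Matrix n p ℝ),
      (Ty * Uᵀ * B * (V * Ty)).trace = (B * V * (Ty * Ty) * Uᵀ).trace := by
    intro U V
    calc (Ty * Uᵀ * B * (V * Ty)).trace
        = ((Ty * (Uᵀ * B * (V * Ty)))).trace := by
          simp only [Matrix.mul_assoc]
      _ = ((Uᵀ * B * (V * Ty)) * Ty).trace := Matrix.trace_mul_comm _ _
      _ = (Uᵀ * (B * (V * (Ty * Ty)))).trace := by simp only [Matrix.mul_assoc]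
      _ = ((B * (V * (Ty * Ty))) * Uᵀ).trace := Matrix.trace_mul_comm _ _
      _ = (B * V * (Ty * Ty) * Uᵀ).trace := by simp only [Matrix.mul_assoc]
  have cross : (B * K' * (Ty * Ty) * K₀ᵀ).trace = (B * K₀ * (Ty * Ty) * K'ᵀ).trace := by
    rw [← Matrix.trace_transpose (B * K' * (Ty * Ty) * K₀ᵀ)]
    have : (B * K' * (Ty * Ty) * K₀ᵀ)ᵀ = K₀ * ((Ty * Ty) * (K'ᵀ * B)) := by
      simp only [Matrix.transpose_mul, Matrix.transpose_transpose, hB,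
        Matrix.transpose_mul, hTy, Matrix.mul_assoc]
    rw [this, show K₀ * (Ty * Ty * (K'ᵀ * B)) = (K₀ * (Ty * Ty) * K'ᵀ) * B by
      simp only [Matrix.mul_assoc], Matrix.trace_mul_comm]
    simp only [Matrix.mul_assoc]
  have expand : ((K' - K₀) * Ty)ᵀ * B * ((K' - K₀) * Ty)
      = Ty * K'ᵀ * B * (K' * Ty) - Ty * K'ᵀ * B * (K₀ * Ty)
        - (Ty * K₀ᵀ * B * (K' * Ty) - Ty * K₀ᵀ * B * (K₀ * Ty)) := by
    simp only [Matrix.transpose_mul, Matrix.transpose_sub, hTy]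
    simp only [Matrix.mul_sub, Matrix.sub_mul]
    abel
  rw [expand, Matrix.trace_sub, Matrix.trace_sub, Matrix.trace_sub,
    key K' K', key K' K₀, key K₀ K', key K₀ K₀, cross]
  ring

lemma aux_key_id {C T : Matrix n n ℝ} (hCs : Cᵀ = C) (hTs : Tᵀ = T)
    (hC : IsUnit C.det) :
    ((C - T)ᵀ * C⁻¹ * (C - T)).trace
      = C.trace + (C⁻¹ * (T * T)).trace - 2 * T.trace := by
  have h1 : (C - T)ᵀ = C - T := by rw [Matrix.transpose_sub, hCs, hTs]
  have h2 : (C - T)ᵀ * C⁻¹ * (C - T)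
      = C - T - (T - T * C⁻¹ * T) := by
    rw [h1, Matrix.sub_mul, Matrix.sub_mul, Matrix.mul_sub, Matrix.mul_sub,
      Matrix.mul_nonsing_inv C hC]
    have h3 : T * C⁻¹ * C = T := by
      rw [Matrix.mul_assoc, Matrix.nonsing_inv_mul C hC, Matrix.mul_one]
    rw [h3]
    simp only [Matrix.one_mul]
  rw [h2]
  have h4 : (T * C⁻¹ * T).trace = (C⁻¹ * (T * T)).trace := by
    rw [Matrix.trace_mul_comm, ← Matrix.mul_assoc, Matrix.trace_mul_comm (T * T) C⁻¹]
  rw [Matrix.trace_sub, Matrix.trace_sub, Matrix.trace_sub, h4]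
  ring

lemma aux_schur {q : Type*} [Fintype q] [DecidableEq q]
    {Sx : Matrix n n ℝ} {Sy : Matrix q q ℝ} (Sxy : Matrix n q ℝ)
    (hSy : Sy.PosDef)
    (hblock : (Matrix.fromBlocks Sx Sxy Sxyᵀ Sy).PosDef) :
    (Sx - Sxy * Sy⁻¹ * Sxyᵀ).PosDef := by
  haveI : Invertible Sy := Sy.invertibleOfIsUnitDet hSy.det_pos.ne'.isUnit
  have hct : Sxyᴴ = Sxyᵀ := Matrix.conjTranspose_eq_transpose_of_trivial Sxy
  refine Matrix.PosDef.of_dotProduct_mulVec_pos ?_ ?_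
  · have hb := hblock.1
    rw [← hct]
    have hx : Sx.IsHermitian := by
      have := congrArg (fun M => Matrix.toBlocks₁₁ M) hb.eq
      simpa [Matrix.fromBlocks_conjTranspose, Matrix.fromBlocks_transpose, Matrix.toBlocks_fromBlocks₁₁, Matrix.IsSymm] using this
    have hyi : (Sy⁻¹).IsHermitian := hSy.inv.1
    have : (Sxy * Sy⁻¹ * Sxyᴴ).IsHermitian := by
      have := Matrix.isHermitian_mul_mul_conjTranspose Sxy hyi
      simpa [Matrix.mul_assoc] using this
    rw [hct] at this ⊢
    exact hx.sub this
  · intro x hx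
    have hz : (Sum.elim x (-((Sy⁻¹ * Sxyᴴ) *ᵥ x)) : n ⊕ q → ℝ) ≠ 0 := by
      intro h
      apply hx
      funext i
      exact congrFun h (Sum.inl i)
    have hp := hblock.dotProduct_mulVec_pos hz
    rw [Matrix.dotProduct_mulVec, ← hct] at hp
    rw [Matrix.schur_complement_eq₂₂ Sx Sxy x _ hSy.1] at hp
    simp only [add_neg_cancel, star_trivial] at hp
    rw [hct] at hp
    simpa [Matrix.dotProduct_mulVec, Matrix.zero_vecMul, dotProduct_comm] using hp

end part2


theorem stmt10 {n m : ℕ}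
    (Sx : Matrix (Fin n) (Fin n) ℝ) (Sy : Matrix (Fin m) (Fin m) ℝ)
    (Sxy : Matrix (Fin n) (Fin m) ℝ) (mx : Fin n → ℝ)
    (hSx : Sx.PosDef) (hSy : Sy.PosDef)
    (hblock : (Matrix.fromBlocks Sx Sxy Sxyᵀ Sy).PosDef)
    (G : Matrix (Fin n) (Fin n) ℝ → Matrix (Fin n) (Fin m) ℝ → (Fin n → ℝ) → ℝ)
    (hG : ∀ A K b, G A K b =
      (1 / 2 : ℝ) * (A * Sx).trace + (1 / 2 : ℝ) * (A⁻¹ * Sx).trace +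
        (1 / 2 : ℝ) * (A⁻¹ * K * Sy * Kᵀ).trace - (A⁻¹ * Sxy * Kᵀ).trace +
        (1 / 2 : ℝ) * ((b - mx) ⬝ᵥ A⁻¹.mulVec (b - mx))) :
    ∃ (A : Matrix (Fin n) (Fin n) ℝ) (K : Matrix (Fin n) (Fin m) ℝ) (b : Fin n → ℝ),
      A.PosDef ∧ b = mx ∧ K = Sxy * Sy⁻¹ ∧ A * Sx * A = Sx - Sxy * Sy⁻¹ * Sxyᵀ ∧
      (∀ (A' : Matrix (Fin n) (Fin n) ℝ) (K' : Matrix (Fin n) (Fin m) ℝ) (b' : Fin n → ℝ),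
        A'.PosDef → G A K b ≤ G A' K' b') ∧
      (∀ (A' : Matrix (Fin n) (Fin n) ℝ) (K' : Matrix (Fin n) (Fin m) ℝ) (b' : Fin n → ℝ),
        A'.PosDef →
        (∀ (A'' : Matrix (Fin n) (Fin n) ℝ) (K'' : Matrix (Fin n) (Fin m) ℝ) (b'' : Fin n → ℝ),
          A''.PosDef → G A' K' b' ≤ G A'' K'' b'') →
        A' = A ∧ K' = K ∧ b' = b) := by
  classical
  set S : Matrix (Fin n) (Fin n) ℝ := Sx - Sxy * Sy⁻¹ * Sxyᵀ with hSdef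
  have hS : S.PosDef := aux_schur Sxy hSy hblock
  set R : Matrix (Fin n) (Fin n) ℝ := CFC.sqrt Sx with hRdef
  have hR : R.PosDef := aux_sqrt_posDef hSx
  have hRs : Rᵀ = R := by
    rw [← Matrix.conjTranspose_eq_transpose_of_trivial]; exact hR.1
  have hRR : R * R = Sx := CFC.sqrt_mul_sqrt_self Sx hSx.posSemidef.nonneg
  have hRdet : IsUnit R.det := hR.det_pos.ne'.isUnit
  have hRinv : (R⁻¹).PosDef := hR.inv
  have hRinvs : (R⁻¹)ᵀ = R⁻¹ := by
    rw [← Matrix.conjTranspose_eq_transpose_of_trivial]; exact hRinv.1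
  have hRinvdet : IsUnit (R⁻¹).det := hRinv.det_pos.ne'.isUnit
  have hRmul : R * R⁻¹ = 1 := Matrix.mul_nonsing_inv R hRdet
  have hRmul' : R⁻¹ * R = 1 := Matrix.nonsing_inv_mul R hRdet
  have hM : (R * S * R).PosDef := by
    have := aux_conj_posDef hS hRdet
    rwa [hRs] at this
  set T : Matrix (Fin n) (Fin n) ℝ := CFC.sqrt (R * S * R) with hTdef
  have hT : T.PosDef := aux_sqrt_posDef hM
  have hTs : Tᵀ = T := by
    rw [← Matrix.conjTranspose_eq_transpose_of_trivial]; exact hT.1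
  have hTT : T * T = R * S * R := CFC.sqrt_mul_sqrt_self (R * S * R) hM.posSemidef.nonneg
  have hTdet : IsUnit T.det := hT.det_pos.ne'.isUnit
  set A : Matrix (Fin n) (Fin n) ℝ := R⁻¹ * T * R⁻¹ with hAdef
  have hA : A.PosDef := by
    have := aux_conj_posDef hT hRinvdet
    rwa [hRinvs] at this
  -- Ty : square root of Sy
  set Ty : Matrix (Fin m) (Fin m) ℝ := CFC.sqrt Sy with hTydef
  have hTy : Ty.PosDef := aux_sqrt_posDef hSy
  have hTys : Tyᵀ = Ty := by
    rw [← Matrix.conjTranspose_eq_transpose_of_trivial]; exact hTy.1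
  have hTyTy : Ty * Ty = Sy := CFC.sqrt_mul_sqrt_self Sy hSy.posSemidef.nonneg
  have hTydet : IsUnit Ty.det := hTy.det_pos.ne'.isUnit
  set K₀ : Matrix (Fin n) (Fin m) ℝ := Sxy * Sy⁻¹ with hK0def
  have hSydet : IsUnit Sy.det := hSy.det_pos.ne'.isUnit
  have hSyinvs : (Sy⁻¹)ᵀ = Sy⁻¹ := by
    rw [← Matrix.conjTranspose_eq_transpose_of_trivial]; exact hSy.inv.1
  have hK0Sy : K₀ * Sy = Sxy := by
    rw [hK0def, Matrix.mul_assoc, Matrix.nonsing_inv_mul Sy hSydet, Matrix.mul_one]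
  have hK0t : K₀ᵀ = Sy⁻¹ * Sxyᵀ := by
    rw [hK0def, Matrix.transpose_mul, hSyinvs]
  -- A * Sx * A = S
  have hASxA : A * Sx * A = S := by
    have e1 : A * Sx * A = R⁻¹ * (T * ((R⁻¹ * R) * ((R * R⁻¹) * (T * R⁻¹)))) := by
      rw [hAdef, ← hRR]; simp only [Matrix.mul_assoc]
    rw [e1, hRmul', hRmul, Matrix.one_mul, Matrix.one_mul]
    have e2 : R⁻¹ * (T * (T * R⁻¹)) = R⁻¹ * ((T * T) * R⁻¹) := by
      simp only [Matrix.mul_assoc]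
    rw [e2, hTT]
    have e3 : R⁻¹ * ((R * S * R) * R⁻¹) = (R⁻¹ * R) * (S * (R * R⁻¹)) := by
      simp only [Matrix.mul_assoc]
    rw [e3, hRmul', hRmul, Matrix.one_mul, Matrix.mul_one]
  -- decomposition of G
  have hdec : ∀ A' K' b', A'.PosDef →
      G A' K' b' = (1 / 2 : ℝ) * (A' * Sx).trace + (1 / 2 : ℝ) * (A'⁻¹ * S).trace
        + (1 / 2 : ℝ) * ((((K' - K₀) * Ty)ᵀ) * A'⁻¹ * ((K' - K₀) * Ty)).trace
        + (1 / 2 : ℝ) * ((b' - mx) ⬝ᵥ A'⁻¹ *ᵥ (b' - mx)) := by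
    intro A' K' b' hA'
    have hBs : (A'⁻¹)ᵀ = A'⁻¹ := by
      rw [← Matrix.conjTranspose_eq_transpose_of_trivial]; exact hA'.inv.1
    rw [hG, aux_expand A'⁻¹ hBs K' K₀ Ty hTys, hTyTy]
    have c1 : A'⁻¹ * K₀ * Sy * K'ᵀ = A'⁻¹ * Sxy * K'ᵀ := by
      rw [Matrix.mul_assoc A'⁻¹ K₀ Sy, hK0Sy]
    have c2 : A'⁻¹ * K₀ * Sy * K₀ᵀ = A'⁻¹ * (Sxy * Sy⁻¹ * Sxyᵀ) := by
      rw [Matrix.mul_assoc A'⁻¹ K₀ Sy, hK0Sy, hK0t]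
      simp only [Matrix.mul_assoc]
    have c3 : (A'⁻¹ * S).trace
        = (A'⁻¹ * Sx).trace - (A'⁻¹ * (Sxy * Sy⁻¹ * Sxyᵀ)).trace := by
      rw [hSdef, Matrix.mul_sub, Matrix.trace_sub]
    rw [c1, c2, c3]
    ring
  -- conjugated variable identity
  have hCeq : ∀ A' : Matrix (Fin n) (Fin n) ℝ, A'.PosDef →
      (A' * Sx).trace + (A'⁻¹ * S).trace
        = (R * A' * R).trace + ((R * A' * R)⁻¹ * (T * T)).trace := by
    intro A' hA'
    have t1 : (A' * Sx).trace = (R * A' * R).trace := by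
      rw [← hRR, ← Matrix.mul_assoc, Matrix.trace_mul_comm (A' * R) R,
        ← Matrix.mul_assoc]
    have hCinv : (R * A' * R)⁻¹ = R⁻¹ * (A'⁻¹ * R⁻¹) := by
      rw [Matrix.mul_inv_rev, Matrix.mul_inv_rev]
    have t2 : ((R * A' * R)⁻¹ * (T * T)).trace = (A'⁻¹ * S).trace := by
      rw [hCinv, hTT]
      have e : R⁻¹ * (A'⁻¹ * R⁻¹) * (R * S * R)
          = R⁻¹ * (A'⁻¹ * ((R⁻¹ * R) * (S * R))) := by
        simp only [Matrix.mul_assoc]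
      rw [e, hRmul', Matrix.one_mul, Matrix.trace_mul_comm]
      have e2 : A'⁻¹ * (S * R) * R⁻¹ = A'⁻¹ * (S * (R * R⁻¹)) := by
        simp only [Matrix.mul_assoc]
      rw [e2, hRmul, Matrix.mul_one]
    rw [t1, t2]
  -- main inequality and equality case
  have hmain : ∀ A' : Matrix (Fin n) (Fin n) ℝ, A'.PosDef →
      2 * T.trace ≤ (A' * Sx).trace + (A'⁻¹ * S).trace ∧
      ((A' * Sx).trace + (A'⁻¹ * S).trace = 2 * T.trace → A' = A) := by
    intro A' hA'
    have hC : (R * A' * R).PosDef := by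
      have := aux_conj_posDef hA' hRdet
      rwa [hRs] at this
    have hCs : (R * A' * R)ᵀ = R * A' * R := by
      rw [← Matrix.conjTranspose_eq_transpose_of_trivial]; exact hC.1
    have hCdet : IsUnit (R * A' * R).det := hC.det_pos.ne'.isUnit
    have hid := aux_key_id hCs hTs hCdet
    have hnn := aux_trace_quad_nonneg hC.inv.posSemidef (R * A' * R - T)
    have hce := hCeq A' hA'
    constructor
    · rw [hce]; linarith
    · intro heq
      rw [hce] at heq
      have hz : ((R * A' * R - T)ᵀ * (R * A' * R)⁻¹ * (R * A' * R - T)).trace = 0 := by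
        rw [hid]; linarith
      have hCT : R * A' * R - T = 0 := aux_trace_quad_zero hC.inv hz
      have hCT' : R * A' * R = T := sub_eq_zero.mp hCT
      have : R⁻¹ * (R * A' * R) * R⁻¹ = A' := by
        have e : R⁻¹ * (R * A' * R) * R⁻¹ = (R⁻¹ * R) * (A' * (R * R⁻¹)) := by
          simp only [Matrix.mul_assoc]
        rw [e, hRmul', hRmul, Matrix.one_mul, Matrix.mul_one]
      rw [← this, hCT', hAdef]
  -- value at the candidate minimizer
  have hCA : R * A * R = T := by
    have e : R * A * R = (R * R⁻¹) * (T * (R⁻¹ * R)) := by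
      rw [hAdef]; simp only [Matrix.mul_assoc]
    rw [e, hRmul, hRmul', Matrix.one_mul, Matrix.mul_one]
  have hfA : (A * Sx).trace + (A⁻¹ * S).trace = 2 * T.trace := by
    rw [hCeq A hA, hCA]
    have e : T⁻¹ * (T * T) = (T⁻¹ * T) * T := by simp only [Matrix.mul_assoc]
    rw [e, Matrix.nonsing_inv_mul T hTdet, Matrix.one_mul]
    ring
  have hval : G A K₀ mx = T.trace := by
    rw [hdec A K₀ mx hA]
    simp only [sub_self, Matrix.zero_mul, Matrix.transpose_zero, Matrix.mul_zero,
      Matrix.trace_zero, Matrix.mulVec_zero, dotProduct_zero, mul_zero, add_zero]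
    linarith [hfA]
  -- lower bound
  have hlb : ∀ A' K' b', A'.PosDef → T.trace ≤ G A' K' b' := by
    intro A' K' b' hA'
    rw [hdec A' K' b' hA']
    have h1 := (hmain A' hA').1
    have h2 := aux_trace_quad_nonneg hA'.inv.posSemidef ((K' - K₀) * Ty)
    have h3 : 0 ≤ (b' - mx) ⬝ᵥ A'⁻¹ *ᵥ (b' - mx) := by
      simpa using hA'.inv.posSemidef.dotProduct_mulVec_nonneg (b' - mx)
    linarith
  refine ⟨A, K₀, mx, hA, rfl, rfl, hASxA, ?_, ?_⟩
  · intro A' K' b' hA'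
    rw [hval]
    exact hlb A' K' b' hA'
  · intro A' K' b' hA' hmin
    have hle : G A' K' b' ≤ T.trace := hval ▸ hmin A K₀ mx hA
    have hge : T.trace ≤ G A' K' b' := hlb A' K' b' hA'
    have heq : G A' K' b' = T.trace := le_antisymm hle hge
    rw [hdec A' K' b' hA'] at heq
    have h1 := (hmain A' hA').1
    have h2 := aux_trace_quad_nonneg hA'.inv.posSemidef ((K' - K₀) * Ty)
    have h3 : 0 ≤ (b' - mx) ⬝ᵥ A'⁻¹ *ᵥ (b' - mx) := by
      simpa using hA'.inv.posSemidef.dotProduct_mulVec_nonneg (b' - mx)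
    have eX : (A' * Sx).trace + (A'⁻¹ * S).trace = 2 * T.trace := by linarith
    have eK : ((((K' - K₀) * Ty)ᵀ) * A'⁻¹ * ((K' - K₀) * Ty)).trace = 0 := by linarith
    have eb : (b' - mx) ⬝ᵥ A'⁻¹ *ᵥ (b' - mx) = 0 := by linarith
    refine ⟨(hmain A' hA').2 eX, ?_, ?_⟩
    · have hKz : (K' - K₀) * Ty = 0 := aux_trace_quad_zero hA'.inv eK
      have : K' - K₀ = 0 := by
        have h := congrArg (fun X => X * Ty⁻¹) hKz
        simpa [Matrix.mul_assoc, Matrix.mul_nonsing_inv Ty hTydet] using h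
      exact sub_eq_zero.mp this
    · by_contra hb
      have hne : b' - mx ≠ 0 := fun h => hb (by rwa [sub_eq_zero] at h)
      have hpos := hA'.inv.dotProduct_mulVec_pos hne
      simp only [star_trivial] at hpos
      linarith
end helpers
end

section
/- Let Σ ∈ S⁺ⁿ be symmetric positive definite. The function A ↦ ½Tr(AΣ) + ½Tr(A^{-1}Σ') over S⁺ⁿ, where Σ' ∈ S⁺ⁿ, attains its minimum at the unique A ∈ S⁺ⁿ satisfying AΣA = Σ', given explicitly by A = Σ^{-1/2}(Σ^{1/2}Σ'Σ^{1/2})^{1/2}Σ^{-1/2}, and the minimal value equals Tr((Σ^{1/2}Σ'Σ^{1/2})^{1/2}). -/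
/-!
With `R = Σ^{1/2}`, `T = (R Σ' R)^{1/2}` and `B = R A R`, cyclicity of the trace turns
`Tr(AΣ) + Tr(A⁻¹Σ')` into `Tr B + Tr(B⁻¹T²) = 2 Tr T + Tr((B - T) B⁻¹ (B - T))`.
The last trace is that of a positive semidefinite matrix, so it is nonnegative and vanishes
only when `B = T`, i.e. `A = R⁻¹ T R⁻¹`.
-/

open Matrix

-- The positive semidefinite square root of a positive semidefinite matrix
-- (the definition of `Matrix.PosSemidef.sqrt` in Mathlib of December 2024, since removed).
open scoped ComplexOrder in
noncomputable def Matrix.PosSemidef.sqrt {n 𝕜 : Type*} [Fintype n] [RCLike 𝕜] [DecidableEq n]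
    {A : Matrix n n 𝕜} (hA : A.PosSemidef) : Matrix n n 𝕜 :=
  (hA.1.eigenvectorUnitary : Matrix n n 𝕜) *
    diagonal (((↑) : ℝ → 𝕜) ∘ (Real.sqrt ·) ∘ hA.1.eigenvalues) *
    (star hA.1.eigenvectorUnitary : Matrix n n 𝕜)

open scoped ComplexOrder

namespace Matrix

variable {ι 𝕜 : Type*} [Fintype ι] [DecidableEq ι] [RCLike 𝕜]

namespace PosSemidef

variable {A : Matrix ι ι 𝕜} (hA : A.PosSemidef)
include hA

lemma sqrt_mul_self : hA.sqrt * hA.sqrt = A := by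
  conv_rhs => rw [hA.1.spectral_theorem, Unitary.conjStarAlgAut_apply]
  set U : Matrix ι ι 𝕜 := (hA.1.eigenvectorUnitary : Matrix ι ι 𝕜)
  have hU : star U * U = 1 := Unitary.star_mul_self_of_mem hA.1.eigenvectorUnitary.2
  simp only [sqrt, Matrix.mul_assoc]
  rw [← Matrix.mul_assoc (star U) U, hU, Matrix.one_mul, ← Matrix.mul_assoc (diagonal _),
    diagonal_mul_diagonal]
  congr 3
  funext i
  simp [← RCLike.ofReal_mul, Real.mul_self_sqrt (hA.eigenvalues_nonneg i)]

lemma posSemidef_sqrt : hA.sqrt.PosSemidef := by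
  have hD : (diagonal (((↑) : ℝ → 𝕜) ∘ (Real.sqrt ·) ∘ hA.1.eigenvalues)).PosSemidef :=
    PosSemidef.diagonal fun i => by simp [Real.sqrt_nonneg]
  simpa [sqrt, star_eq_conjTranspose] using
    hD.mul_mul_conjTranspose_same (hA.1.eigenvectorUnitary : Matrix ι ι 𝕜)

lemma posDef_sqrt_iff : hA.sqrt.PosDef ↔ A.PosDef := by
  rw [hA.posSemidef_sqrt.posDef_iff_isUnit, hA.posDef_iff_isUnit, ← isUnit_mul_self_iff,
    hA.sqrt_mul_self]

end PosSemidef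

lemma IsHermitian.posDef_mul_mul_self_iff {α : Type*} [Ring α] [PartialOrder α] [StarRing α]
    {U X : Matrix ι ι α} (hU : U.IsHermitian) (hU' : IsUnit U) :
    (U * X * U).PosDef ↔ X.PosDef := by
  simpa only [star_eq_conjTranspose, hU.eq] using hU'.posDef_star_left_conjugate_iff

lemma PosDef.trace_conjTranspose_mul_mul_same_eq_zero_iff {A : Matrix ι ι 𝕜} (hA : A.PosDef)
    {B : Matrix ι ι 𝕜} : (Bᴴ * A * B).trace = 0 ↔ B = 0 := by
  rw [(hA.posSemidef.conjTranspose_mul_mul_same B).trace_eq_zero_iff]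
  refine ⟨fun h => ext_iff_mulVec.2 fun v => ?_, by rintro rfl; simp⟩
  rw [zero_mulVec]
  by_contra hv
  have := hA.dotProduct_mulVec_pos hv
  rw [star_mulVec, dotProduct_mulVec, dotProduct_mulVec, vecMul_vecMul, vecMul_vecMul,
    ← Matrix.mul_assoc, h] at this
  simp at this

section sub_mul_inv_mul_sub

variable {B T : Matrix ι ι 𝕜} (hB : B.PosDef) (hT : T.IsHermitian)
include hB hT

lemma PosDef.trace_sub_mul_inv_mul_sub_nonneg : 0 ≤ ((B - T) * B⁻¹ * (B - T)).trace := by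
  have hC : (B - T)ᴴ = B - T := (hB.isHermitian.sub hT).eq
  simpa only [hC] using (hB.inv.posSemidef.conjTranspose_mul_mul_same (B - T)).trace_nonneg

lemma PosDef.trace_sub_mul_inv_mul_sub_eq_zero_iff :
    ((B - T) * B⁻¹ * (B - T)).trace = 0 ↔ B = T := by
  have hC : (B - T)ᴴ = B - T := (hB.isHermitian.sub hT).eq
  rw [← sub_eq_zero (a := B), ← hB.inv.trace_conjTranspose_mul_mul_same_eq_zero_iff, hC]

end sub_mul_inv_mul_sub

section trace

variable {K : Type*} [CommRing K]

lemma trace_add_trace_inv_mul_mul_self {B T : Matrix ι ι K} (hB : IsUnit B.det) :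
    B.trace + (B⁻¹ * (T * T)).trace = 2 * T.trace + ((B - T) * B⁻¹ * (B - T)).trace := by
  have hexp : (B - T) * B⁻¹ * (B - T) = B - T - T + T * B⁻¹ * T := by
    rw [sub_mul, mul_nonsing_inv _ hB, one_sub_mul, mul_sub, nonsing_inv_mul_cancel_right _ _ hB]
    abel
  rw [hexp, trace_add, trace_sub, trace_sub, Matrix.mul_assoc, trace_mul_comm T, Matrix.mul_assoc]
  ring

variable {R T S S' : Matrix ι ι K} (hR : IsUnit R.det) (hS : R * R = S)
  (hS' : T * T = R * S' * R)
include hR hS hS'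

lemma trace_mul_add_trace_inv_mul_eq {A : Matrix ι ι K} (hA : IsUnit A.det) :
    (A * S).trace + (A⁻¹ * S').trace =
      2 * T.trace + ((R * A * R - T) * (R * A * R)⁻¹ * (R * A * R - T)).trace := by
  have hAS : (A * S).trace = (R * A * R).trace := by
    rw [← hS, ← Matrix.mul_assoc, trace_mul_cycle]
  have hAS' : (A⁻¹ * S').trace = ((R * A * R)⁻¹ * (T * T)).trace := by
    rw [hS', mul_inv_rev, mul_inv_rev, Matrix.mul_assoc, trace_mul_comm R⁻¹]
    simp only [Matrix.mul_assoc, nonsing_inv_mul_cancel_left _ _ hR, mul_nonsing_inv _ hR,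
      Matrix.mul_one]
  rw [hAS, hAS', trace_add_trace_inv_mul_mul_self]
  simpa only [det_mul] using (hR.mul hA).mul hR

end trace

section bures

variable {R T S S' A : Matrix ι ι 𝕜} (hR : R.PosDef) (hT : T.IsHermitian) (hS : R * R = S)
  (hS' : T * T = R * S' * R) (hA : A.PosDef)
include hR hT hS hS' hA

lemma two_mul_trace_le_trace_mul_add_trace_inv_mul :
    2 * T.trace ≤ (A * S).trace + (A⁻¹ * S').trace := by
  have hB := (hR.isHermitian.posDef_mul_mul_self_iff hR.isUnit).2 hA
  rw [trace_mul_add_trace_inv_mul_eq hR.det_pos.ne'.isUnit hS hS' hA.det_pos.ne'.isUnit]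
  exact le_add_of_nonneg_right (hB.trace_sub_mul_inv_mul_sub_nonneg hT)

lemma trace_mul_add_trace_inv_mul_eq_two_mul_trace_iff :
    (A * S).trace + (A⁻¹ * S').trace = 2 * T.trace ↔ R * A * R = T := by
  have hB := (hR.isHermitian.posDef_mul_mul_self_iff hR.isUnit).2 hA
  rw [trace_mul_add_trace_inv_mul_eq hR.det_pos.ne'.isUnit hS hS' hA.det_pos.ne'.isUnit,
    add_eq_left, hB.trace_sub_mul_inv_mul_sub_eq_zero_iff hT]

end bures

end Matrix

theorem stmt13 {n : ℕ}
    (S S' : Matrix (Fin n) (Fin n) ℝ) (hS : S.PosDef) (hS' : S'.PosDef)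
    (hmid : (hS.posSemidef.sqrt * S' * hS.posSemidef.sqrt).PosSemidef)
    (A0 : Matrix (Fin n) (Fin n) ℝ)
    (hA0 : A0 = hS.posSemidef.sqrt⁻¹ * hmid.sqrt * hS.posSemidef.sqrt⁻¹)
    (G : Matrix (Fin n) (Fin n) ℝ → ℝ)
    (hG : ∀ A, G A = (1 / 2 : ℝ) * (A * S).trace + (1 / 2 : ℝ) * (A⁻¹ * S').trace) :
    A0.PosDef ∧ A0 * S * A0 = S' ∧
    (∀ A : Matrix (Fin n) (Fin n) ℝ, A.PosDef → G A0 ≤ G A) ∧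
    (∀ A : Matrix (Fin n) (Fin n) ℝ, A.PosDef → (∀ B, B.PosDef → G A ≤ G B) → A = A0) ∧
    G A0 = hmid.sqrt.trace := by
  set R := hS.posSemidef.sqrt
  set T := hmid.sqrt
  have hRR : R * R = S := hS.posSemidef.sqrt_mul_self
  have hTT : T * T = R * S' * R := hmid.sqrt_mul_self
  have hR : R.PosDef := hS.posSemidef.posDef_sqrt_iff.2 hS
  have hT : T.PosDef :=
    hmid.posDef_sqrt_iff.2 ((hR.isHermitian.posDef_mul_mul_self_iff hR.isUnit).2 hS')
  have hR_cancel : ∀ X Y, R * X * R = R * Y * R → X = Y := fun X Y h =>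
    hR.isUnit.mul_left_cancel (hR.isUnit.mul_right_cancel h)
  have hRA0R : R * A0 * R = T := by
    have hRdet := hR.det_pos.ne'.isUnit
    rw [show A0 = R⁻¹ * T * R⁻¹ from hA0, Matrix.mul_assoc,
      nonsing_inv_mul_cancel_right _ _ hRdet]
    exact mul_nonsing_inv_cancel_left _ _ hRdet
  have hA0_pos : A0.PosDef := by
    rwa [← hR.isHermitian.posDef_mul_mul_self_iff hR.isUnit, hRA0R]
  have hlower := fun (A : Matrix (Fin n) (Fin n) ℝ) (hA : A.PosDef) =>
    two_mul_trace_le_trace_mul_add_trace_inv_mul hR hT.isHermitian hRR hTT hA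
  have hequal := fun (A : Matrix (Fin n) (Fin n) ℝ) (hA : A.PosDef) =>
    trace_mul_add_trace_inv_mul_eq_two_mul_trace_iff hR hT.isHermitian hRR hTT hA
  have hGA0 : G A0 = T.trace := by
    rw [hG]
    linarith [(hequal A0 hA0_pos).2 hRA0R]
  have hGA0_le : ∀ A : Matrix (Fin n) (Fin n) ℝ, A.PosDef → G A0 ≤ G A := fun A hA => by
    rw [hGA0, hG]
    linarith [hlower A hA]
  refine ⟨hA0_pos, ?_, hGA0_le, fun A hA hmin => ?_, hGA0⟩
  · apply hR_cancel
    rw [← hRR, ← hTT, ← hRA0R]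
    simp only [Matrix.mul_assoc]
  · apply hR_cancel
    rw [hRA0R, ← hequal A hA]
    have hGA_le := hmin A0 hA0_pos
    rw [hGA0, hG] at hGA_le
    linarith [hlower A hA]
end
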